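/- Let S be an additive commutative monoid and let A₀, B₀ ⊆ S be ℕ-disjoint sets (i.e., [n]A₀ ∩ [n]B₀ = ∅ for every positive integer n). Then there exist ℕ-disjoint ℕ-convex sets A, B ⊆ S such that A₀ ⊆ A, B₀ ⊆ B, and A ∪ B = S. If, in addition, S itself is ℕ-konvex, then A and B are also ℕ-konvex. -/
import Mathlib


open Pointwise

/-- The dilation `nA = {n • x : x ∈ A}`. -/
def dilate {S : Type*} [AddCommMonoid S] (n : ℕ) (A : Set S) : Set S :=
  (fun x => n • x) '' A

/-- The "inverse dilation" `n⁻¹A = {x : n • x ∈ A}`. -/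
def invDilate {S : Type*} [AddCommMonoid S] (n : ℕ) (A : Set S) : Set S :=
  {x | n • x ∈ A}

/-- The `n`-fold sumset `[n]A = {x₁ + ⋯ + xₙ : xᵢ ∈ A}`. -/
def foldSum {S : Type*} [AddCommMonoid S] (n : ℕ) (A : Set S) : Set S :=
  {y | ∃ f : Fin n → S, (∀ i, f i ∈ A) ∧ y = ∑ i, f i}

/-- `A` is `n`-convex if `n⁻¹([n]A) ⊆ A`. -/
def IsNConvex {S : Type*} [AddCommMonoid S] (n : ℕ) (A : Set S) : Prop :=
  invDilate n (foldSum n A) ⊆ A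

/-- `A` is `n`-konvex if `[n]A ⊆ nA`. -/
def IsNKonvex {S : Type*} [AddCommMonoid S] (n : ℕ) (A : Set S) : Prop :=
  foldSum n A ⊆ dilate n A

/-- `A` is `F`-convex if it is `n`-convex for every `n ∈ F`. -/
def IsFConvex {S : Type*} [AddCommMonoid S] (F : Set ℕ) (A : Set S) : Prop :=
  ∀ n ∈ F, IsNConvex n A

/-- `A` is `F`-konvex if it is `n`-konvex for every `n ∈ F`. -/
def IsFKonvex {S : Type*} [AddCommMonoid S] (F : Set ℕ) (A : Set S) : Prop :=
  ∀ n ∈ F, IsNKonvex n A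

/-- The `F`-convex hull of `A`. -/
def convHullF {S : Type*} [AddCommMonoid S] (F : Set ℕ) (A : Set S) : Set S :=
  ⋂₀ {C | A ⊆ C ∧ IsFConvex F C}

/-- The set of positive integers. -/
def posNat : Set ℕ := {n | 0 < n}

/-- `A` and `B` are `F`-disjoint if `[n]A ∩ [n]B = ∅` for all `n ∈ F`. -/
def FDisjoint {S : Type*} [AddCommMonoid S] (F : Set ℕ) (A B : Set S) : Prop :=
  ∀ n ∈ F, foldSum n A ∩ foldSum n B = ∅

section lemmas
variable {S : Type*} [AddCommMonoid S] {A B : Set S}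
set_option linter.unusedSectionVars false


lemma zero_mem_foldSum_zero (A : Set S) : (0 : S) ∈ foldSum 0 A :=
  ⟨fun i => i.elim0, fun i => i.elim0, by simp⟩

lemma foldSum_mono {n : ℕ} (h : A ⊆ B) : foldSum n A ⊆ foldSum n B := by
  rintro y ⟨f, hf, rfl⟩
  exact ⟨f, fun i => h (hf i), rfl⟩

lemma add_mem_foldSum {m n : ℕ} {a b : S} (ha : a ∈ foldSum m A) (hb : b ∈ foldSum n A) :
    a + b ∈ foldSum (m + n) A := by
  obtain ⟨f, hf, rfl⟩ := ha
  obtain ⟨g, hg, rfl⟩ := hb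
  refine ⟨Fin.append f g, ?_, ?_⟩
  · intro i
    refine Fin.addCases (fun j => ?_) (fun j => ?_) i
    · rw [Fin.append_left]; exact hf j
    · rw [Fin.append_right]; exact hg j
  · rw [Fin.sum_univ_add]
    simp [Fin.append_left, Fin.append_right]

lemma nsmul_mem_foldSum {m : ℕ} {a : S} (ha : a ∈ foldSum m A) (k : ℕ) :
    k • a ∈ foldSum (k * m) A := by
  induction k with
  | zero => simpa using zero_mem_foldSum_zero A
  | succ k ih =>
    have : (k + 1) • a = k • a + a := by rw [succ_nsmul]
    rw [this, Nat.succ_mul]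
    exact add_mem_foldSum ih ha

lemma smul_mem_foldSum {x : S} (hx : x ∈ A) (n : ℕ) : n • x ∈ foldSum n A :=
  ⟨fun _ => x, fun _ => hx, by simp⟩

lemma finsetSum_mem_foldSum {ι : Type*} (t : Finset ι) (g : ι → S)
    (hg : ∀ i ∈ t, g i ∈ A) : (∑ i ∈ t, g i) ∈ foldSum t.card A := by
  refine ⟨fun i => g (t.equivFin.symm i), fun i => hg _ (t.equivFin.symm i).2, ?_⟩
  rw [← Finset.sum_coe_sort t g]
  exact (Equiv.sum_comp t.equivFin.symm (fun x : t => g x)).symm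

lemma mem_foldSum_union_singleton {m : ℕ} {x y : S}
    (hy : y ∈ foldSum m (A ∪ {x})) :
    ∃ j, j ≤ m ∧ ∃ s ∈ foldSum (m - j) A, y = j • x + s := by
  obtain ⟨f, hf, rfl⟩ := hy
  classical
  set T : Finset (Fin m) := Finset.univ.filter (fun i => f i = x) with hT
  refine ⟨T.card, le_trans (Finset.card_filter_le _ _) (by simp), ?_⟩
  have hsplit : ∑ i, f i = ∑ i ∈ T, f i + ∑ i ∈ Finset.univ.filter (fun i => ¬ f i = x), f i :=
    (Finset.sum_filter_add_sum_filter_not _ _ _).symm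
  have hTsum : ∑ i ∈ T, f i = T.card • x := by
    rw [Finset.sum_congr rfl (fun i hi => (Finset.mem_filter.1 hi).2), Finset.sum_const]
  have hcard : T.card + (Finset.univ.filter (fun i => ¬ f i = x)).card = m := by
    rw [Finset.card_filter_add_card_filter_not]; simp
  have hmem : (∑ i ∈ Finset.univ.filter (fun i => ¬ f i = x), f i) ∈
      foldSum (Finset.univ.filter (fun i => ¬ f i = x)).card A := by
    refine finsetSum_mem_foldSum _ _ (fun i hi => ?_)
    rcases hf i with h | h
    · exact h
    · exact absurd h (Finset.mem_filter.1 hi).2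
  refine ⟨_, ?_, by rw [hsplit, hTsum]⟩
  have : (Finset.univ.filter (fun i => ¬ f i = x)).card = m - T.card := by omega
  rwa [← this]

/-- Exchange lemma. -/
lemma exchange (hd : ∀ n : ℕ, 0 < n → foldSum n A ∩ foldSum n B = ∅) (x : S) :
    (∀ n : ℕ, 0 < n → foldSum n (A ∪ {x}) ∩ foldSum n B = ∅) ∨
    (∀ n : ℕ, 0 < n → foldSum n A ∩ foldSum n (B ∪ {x}) = ∅) := by
  by_contra hcon
  push_neg at hcon
  obtain ⟨⟨m, hm, hmne⟩, ⟨n, hn, hnne⟩⟩ := hcon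
  obtain ⟨y, hyA, hyB⟩ := hmne
  obtain ⟨z, hzA, hzB⟩ := hnne
  obtain ⟨j, hjm, s, hs, hys⟩ := mem_foldSum_union_singleton hyA
  obtain ⟨i, hin, u, hu, hzu⟩ := mem_foldSum_union_singleton hzB
  have hj : 0 < j := by
    rcases Nat.eq_zero_or_pos j with rfl | h
    · exfalso
      have hyA' : y ∈ foldSum m A := by rw [hys]; simpa using hs
      have h2 : y ∈ foldSum m A ∩ foldSum m B := ⟨hyA', hyB⟩
      rw [hd m hm] at h2
      exact h2
    · exact h
  have hi : 0 < i := by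
    rcases Nat.eq_zero_or_pos i with rfl | h
    · exfalso
      have hzB' : z ∈ foldSum n B := by rw [hzu]; simpa using hu
      have h2 : z ∈ foldSum n A ∩ foldSum n B := ⟨hzA, hzB'⟩
      rw [hd n hn] at h2
      exact h2
    · exact h
  -- the key identity
  have key : i • y + j • u = j • z + i • s := by
    rw [hys, hzu, smul_add, smul_add, smul_smul, smul_smul, mul_comm]
    abel
  have hmB : i • y + j • u ∈ foldSum (i * m + j * (n - i)) B :=
    add_mem_foldSum (nsmul_mem_foldSum hyB i) (nsmul_mem_foldSum hu j)
  have hmA : j • z + i • s ∈ foldSum (j * n + i * (m - j)) A :=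
    add_mem_foldSum (nsmul_mem_foldSum hzA j) (nsmul_mem_foldSum hs i)
  have hNeq : j * n + i * (m - j) = i * m + j * (n - i) := by
    obtain ⟨m', rfl⟩ : ∃ m', m = j + m' := ⟨m - j, by omega⟩
    obtain ⟨n', rfl⟩ : ∃ n', n = i + n' := ⟨n - i, by omega⟩
    simp only [Nat.add_sub_cancel_left]
    ring
  have hNpos : 0 < i * m + j * (n - i) := by
    have := Nat.mul_pos hi hm; omega
  have := hd _ hNpos
  rw [hNeq] at hmA
  rw [← key] at hmA
  have : i • y + j • u ∈ foldSum (i * m + j * (n - i)) A ∩ foldSum (i * m + j * (n - i)) B :=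
    ⟨hmA, hmB⟩
  rw [hd _ hNpos] at this
  exact this

lemma chain_foldSum {c : Set (Set S)} (hc : IsChain (· ⊆ ·) c) {y0 : Set S} (hy0 : y0 ∈ c)
    {n : ℕ} (f : Fin n → S) (hf : ∀ i, f i ∈ ⋃₀ c) : ∃ C ∈ c, ∀ i, f i ∈ C := by
  induction n with
  | zero => exact ⟨y0, hy0, fun i => i.elim0⟩
  | succ n ih =>
    obtain ⟨C, hC, hCf⟩ := ih (fun i => f i.succ) (fun i => hf i.succ)
    obtain ⟨D, hD, hDf⟩ := hf 0
    rcases hc.total hC hD with h | h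
    · exact ⟨D, hD, fun i => Fin.cases hDf (fun j => h (hCf j)) i⟩
    · exact ⟨C, hC, fun i => Fin.cases (h hDf) hCf i⟩

end lemmas

theorem stmt19 {S : Type*} [AddCommMonoid S] (A₀ B₀ : Set S)
    (hdisj : ∀ n : ℕ, 0 < n → foldSum n A₀ ∩ foldSum n B₀ = ∅) :
    ∃ A B : Set S, A₀ ⊆ A ∧ B₀ ⊆ B ∧ A ∪ B = Set.univ ∧
      (∀ n : ℕ, 0 < n → foldSum n A ∩ foldSum n B = ∅) ∧
      (∀ n : ℕ, 0 < n → IsNConvex n A) ∧ (∀ n : ℕ, 0 < n → IsNConvex n B) ∧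
      ((∀ n : ℕ, 0 < n → IsNKonvex n (Set.univ : Set S)) →
        (∀ n : ℕ, 0 < n → IsNKonvex n A) ∧ (∀ n : ℕ, 0 < n → IsNKonvex n B)) := by
  classical
  set 𝒮 : Set (Set S × Set S) :=
    {p | A₀ ⊆ p.1 ∧ B₀ ⊆ p.2 ∧ ∀ n : ℕ, 0 < n → foldSum n p.1 ∩ foldSum n p.2 = ∅} with h𝒮
  have hbase : ((A₀, B₀) : Set S × Set S) ∈ 𝒮 := ⟨subset_rfl, subset_rfl, hdisj⟩
  have hchain : ∀ c ⊆ 𝒮, IsChain (· ≤ ·) c → ∀ y ∈ c, ∃ ub ∈ 𝒮, ∀ z ∈ c, z ≤ ub := by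
    intro c hc𝒮 hc y hy
    refine ⟨(⋃₀ (Prod.fst '' c), ⋃₀ (Prod.snd '' c)), ⟨?_, ?_, ?_⟩, ?_⟩
    · exact ((hc𝒮 hy).1).trans (Set.subset_sUnion_of_mem ⟨y, hy, rfl⟩)
    · exact ((hc𝒮 hy).2.1).trans (Set.subset_sUnion_of_mem ⟨y, hy, rfl⟩)
    · intro n hn
      rw [Set.eq_empty_iff_forall_notMem]
      rintro w ⟨hw1, hw2⟩
      have hch1 : IsChain (· ⊆ ·) (Prod.fst '' c) := by
        rintro _ ⟨p, hp, rfl⟩ _ ⟨q, hq, rfl⟩ _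
        rcases hc.total hp hq with h | h
        · exact Or.inl h.1
        · exact Or.inr h.1
      have hch2 : IsChain (· ⊆ ·) (Prod.snd '' c) := by
        rintro _ ⟨p, hp, rfl⟩ _ ⟨q, hq, rfl⟩ _
        rcases hc.total hp hq with h | h
        · exact Or.inl h.2
        · exact Or.inr h.2
      obtain ⟨f, hf, rfl⟩ := hw1
      obtain ⟨C, hC, hCf⟩ := chain_foldSum hch1 ⟨y, hy, rfl⟩ f hf
      obtain ⟨g, hg, hgw⟩ := hw2
      obtain ⟨D, hD, hDg⟩ := chain_foldSum hch2 ⟨y, hy, rfl⟩ g hg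
      obtain ⟨p, hp, rfl⟩ := hC
      obtain ⟨q, hq, rfl⟩ := hD
      rcases hc.total hp hq with h | h
      · have h1 : (∑ i, f i) ∈ foldSum n q.1 := ⟨f, fun i => h.1 (hCf i), rfl⟩
        have h2 : (∑ i, f i) ∈ foldSum n q.2 := ⟨g, hDg, hgw⟩
        have := (hc𝒮 hq).2.2 n hn
        have h3 : (∑ i, f i) ∈ foldSum n q.1 ∩ foldSum n q.2 := ⟨h1, h2⟩
        rw [this] at h3; exact h3
      · have h1 : (∑ i, f i) ∈ foldSum n p.1 := ⟨f, hCf, rfl⟩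
        have h2 : (∑ i, f i) ∈ foldSum n p.2 := ⟨g, fun i => h.2 (hDg i), hgw⟩
        have := (hc𝒮 hp).2.2 n hn
        have h3 : (∑ i, f i) ∈ foldSum n p.1 ∩ foldSum n p.2 := ⟨h1, h2⟩
        rw [this] at h3; exact h3
    · intro z hz
      exact ⟨Set.subset_sUnion_of_mem ⟨z, hz, rfl⟩, Set.subset_sUnion_of_mem ⟨z, hz, rfl⟩⟩
  obtain ⟨p, -, hp𝒮, hpmax⟩ := zorn_le_nonempty₀ 𝒮 hchain (A₀, B₀) hbase
  obtain ⟨A, B⟩ := p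
  obtain ⟨hA₀, hB₀, hd⟩ := hp𝒮
  have hcover : A ∪ B = Set.univ := by
    rw [Set.eq_univ_iff_forall]
    intro x
    rcases exchange hd x with h | h
    · left
      have hmem : ((A ∪ {x}, B) : Set S × Set S) ∈ 𝒮 :=
        ⟨hA₀.trans Set.subset_union_left, hB₀, h⟩
      have hle : ((A, B) : Set S × Set S) ≤ (A ∪ {x}, B) :=
        ⟨Set.subset_union_left, subset_rfl⟩
      exact (hpmax hmem hle).1 (Or.inr rfl)
    · right
      have hmem : ((A, B ∪ {x}) : Set S × Set S) ∈ 𝒮 :=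
        ⟨hA₀, hB₀.trans Set.subset_union_left, h⟩
      have hle : ((A, B) : Set S × Set S) ≤ (A, B ∪ {x}) :=
        ⟨subset_rfl, Set.subset_union_left⟩
      exact (hpmax hmem hle).2 (Or.inr rfl)
  have hconvA : ∀ n : ℕ, 0 < n → IsNConvex n A := by
    intro n hn z hz
    by_contra hzA
    have hzB : z ∈ B :=
      (Set.eq_univ_iff_forall.1 hcover z).resolve_left hzA
    have h1 : n • z ∈ foldSum n A := hz
    have h2 : n • z ∈ foldSum n B := smul_mem_foldSum hzB n
    have h3 : n • z ∈ foldSum n A ∩ foldSum n B := ⟨h1, h2⟩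
    rw [hd n hn] at h3; exact h3
  have hconvB : ∀ n : ℕ, 0 < n → IsNConvex n B := by
    intro n hn z hz
    by_contra hzB
    have hzA : z ∈ A :=
      (Set.eq_univ_iff_forall.1 hcover z).resolve_right hzB
    have h1 : n • z ∈ foldSum n B := hz
    have h2 : n • z ∈ foldSum n A := smul_mem_foldSum hzA n
    have h3 : n • z ∈ foldSum n A ∩ foldSum n B := ⟨h2, h1⟩
    rw [hd n hn] at h3; exact h3
  refine ⟨A, B, hA₀, hB₀, hcover, hd, hconvA, hconvB, ?_⟩
  intro hK
  constructor
  · intro n hn w hw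
    obtain ⟨z, -, hz⟩ := hK n hn (foldSum_mono (Set.subset_univ A) hw)
    have hz' : n • z = w := hz
    have hzA : z ∈ A := hconvA n hn (show n • z ∈ foldSum n A by rw [hz']; exact hw)
    exact ⟨z, hzA, hz⟩
  · intro n hn w hw
    obtain ⟨z, -, hz⟩ := hK n hn (foldSum_mono (Set.subset_univ B) hw)
    have hz' : n • z = w := hz
    have hzB : z ∈ B := hconvB n hn (show n • z ∈ foldSum n B by rw [hz']; exact hw)
    exact ⟨z, hzB, hz⟩
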